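/- arXiv:1104.2105 — 2 statements merged into one kernel-verified Lean document; each statement's English description precedes it below -/
import Mathlib

section
/- Let M be an abelian group and let r : UM → (UM)^{ab} ⊗ ℤ/2ℤ (the abelianization of UM modulo squares) denote the natural map. For every abelian group N with 2N = 0 and every quadratic map q : M → N there exists a unique group homomorphism f : (UM)^{ab} ⊗ ℤ/2ℤ → N with f(r(s(m))) = q(m) for all m ∈ M; that is, r ∘ s : M → (UM)^{ab} ⊗ ℤ/2ℤ is the universal quadratic map out of M to an abelian group killed by 2. -/
open scoped TensorProduct

/-- The group `UM`: the kernel of `(T^{<3}M)^× → ℤ^× = {±1}`, where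
`T^{<3}M = ℤ ⊕ M ⊕ (M ⊗_ℤ M)` is the tensor algebra of `M` over `ℤ` truncated in
degrees `< 3`.  An element `1 + m + t` (with `m : M`, `t : M ⊗[ℤ] M`) is encoded
as the pair `⟨m, t⟩`, and the multiplication is
`(1+m+t)(1+m'+t') = 1 + (m+m') + (m ⊗ m' + t + t')`. -/
@[ext]
structure UGroup (M : Type) [AddCommGroup M] where
  m : M
  t : TensorProduct ℤ M M

namespace UGroup

variable {M : Type} [AddCommGroup M]

noncomputable instance : Mul (UGroup M) :=
  ⟨fun x y => ⟨x.m + y.m, x.m ⊗ₜ[ℤ] y.m + x.t + y.t⟩⟩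
noncomputable instance : One (UGroup M) := ⟨⟨0, 0⟩⟩
noncomputable instance : Inv (UGroup M) :=
  ⟨fun x => ⟨-x.m, x.m ⊗ₜ[ℤ] x.m - x.t⟩⟩

@[simp] lemma mul_m (x y : UGroup M) : (x * y).m = x.m + y.m := rfl
@[simp] lemma mul_t (x y : UGroup M) : (x * y).t = x.m ⊗ₜ[ℤ] y.m + x.t + y.t := rfl
@[simp] lemma one_m : (1 : UGroup M).m = 0 := rfl
@[simp] lemma one_t : (1 : UGroup M).t = 0 := rfl
@[simp] lemma inv_m (x : UGroup M) : (x⁻¹).m = -x.m := rfl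
@[simp] lemma inv_t (x : UGroup M) : (x⁻¹).t = x.m ⊗ₜ[ℤ] x.m - x.t := rfl

noncomputable instance : Group (UGroup M) where
  mul_assoc x y z := by
    ext
    · simp [add_assoc]
    · simp [TensorProduct.add_tmul, TensorProduct.tmul_add]
      abel
  one_mul x := by ext <;> simp
  mul_one x := by ext <;> simp
  inv_mul_cancel x := by
    ext
    · simp
    · simp [TensorProduct.neg_tmul]
      abel

/-- The set-theoretic section `s : M → UM`, `m ↦ 1 + m`. -/
noncomputable def s (m : M) : UGroup M := ⟨m, 0⟩

end UGroup

/-- A quadratic map `q : M → N` of abelian groups: a function such that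
`(m, m') ↦ q(m+m') − q(m) − q(m')` is ℤ-bilinear (i.e. bi-additive). -/
def IsQuadraticMap {M N : Type} [AddCommGroup M] [AddCommGroup N] (q : M → N) : Prop :=
  (∀ m₁ m₂ m' : M,
      q (m₁ + m₂ + m') - q (m₁ + m₂) - q m' =
        (q (m₁ + m') - q m₁ - q m') + (q (m₂ + m') - q m₂ - q m')) ∧
  (∀ m m₁' m₂' : M,
      q (m + (m₁' + m₂')) - q m - q (m₁' + m₂') =
        (q (m + m₁') - q m - q m₁') + (q (m + m₂') - q m - q m₂'))

/-- The (normal) subgroup of `UM` generated by all commutators and all squares,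
so that the quotient is `(UM)^{ab} ⊗ ℤ/2ℤ`, the abelianization of `UM` modulo
squares. -/
noncomputable def commSq (M : Type) [AddCommGroup M] : Subgroup (UGroup M) :=
  Subgroup.normalClosure
    {x : UGroup M | (∃ a b : UGroup M, x = a * b * a⁻¹ * b⁻¹) ∨ (∃ a : UGroup M, x = a * a)}

instance (M : Type) [AddCommGroup M] : (commSq M).Normal :=
  Subgroup.normalClosure_normal

/-!
The homomorphism `1 + m + t ↦ q(m) − B(t)`, where `B : M ⊗ M → N` linearizes the polar form
`B(m ⊗ m') = q(m+m') − q(m) − q(m')`, is multiplicative exactly because `B` corrects the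
cross term `m ⊗ m'` of the product. Since `N` is abelian and killed by `2`, it factors through
`(UM)^{ab} ⊗ ℤ/2ℤ`; it is unique because `UM` is generated by `s(M)`, as
`1 + m ⊗ m' = s(m) s(m') s(m+m')⁻¹`.
-/

namespace IsQuadraticMap

variable {M N : Type} [AddCommGroup M] [AddCommGroup N] {q : M → N}

lemma map_zero (hq : IsQuadraticMap q) : q 0 = 0 := by
  simpa using hq.2 0 0 0

noncomputable def polar (hq : IsQuadraticMap q) : M →+ M →+ N :=
  AddMonoidHom.mk'
    (fun m => AddMonoidHom.mk' (fun m' => q (m + m') - q m - q m') (hq.2 m))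
    (fun m₁ m₂ => AddMonoidHom.ext (hq.1 m₁ m₂))

noncomputable def polarTensor (hq : IsQuadraticMap q) : M ⊗[ℤ] M →+ N :=
  TensorProduct.liftAddHom hq.polar fun r m m' => by simp only [map_zsmul, AddMonoidHom.zsmul_apply]

@[simp] lemma polarTensor_tmul (hq : IsQuadraticMap q) (m m' : M) :
    hq.polarTensor (m ⊗ₜ m') = q (m + m') - q m - q m' := rfl

end IsQuadraticMap

namespace UGroup

variable {M N : Type} [AddCommGroup M] [AddCommGroup N]

noncomputable def liftQuadratic {q : M → N} (hq : IsQuadraticMap q) :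
    UGroup M →* Multiplicative N where
  toFun x := Multiplicative.ofAdd (q x.m - hq.polarTensor x.t)
  map_one' := by simp [hq.map_zero]
  map_mul' x y := by
    simp only [mul_m, mul_t, map_add, IsQuadraticMap.polarTensor_tmul, ← ofAdd_add]
    congr 1
    abel

@[simp] lemma liftQuadratic_s {q : M → N} (hq : IsQuadraticMap q) (m : M) :
    liftQuadratic hq (s m) = Multiplicative.ofAdd (q m) := by
  simp [liftQuadratic, s]

lemma closure_range_s : Subgroup.closure (Set.range (s : M → UGroup M)) = ⊤ := by
  set H := Subgroup.closure (Set.range (s : M → UGroup M))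
  have hs (m : M) : s m ∈ H := Subgroup.subset_closure ⟨m, rfl⟩
  have hpure (t : M ⊗[ℤ] M) : (⟨0, t⟩ : UGroup M) ∈ H := by
    induction t using TensorProduct.induction_on with
    | zero => exact one_mem H
    | tmul a b =>
      have h : (⟨0, a ⊗ₜ[ℤ] b⟩ : UGroup M) = s a * s b * (s (a + b))⁻¹ := by
        ext
        · simp [s]
        · simp [s, TensorProduct.add_tmul, TensorProduct.tmul_add, TensorProduct.tmul_neg]
          abel
      rw [h]
      exact mul_mem (mul_mem (hs a) (hs b)) (inv_mem (hs (a + b)))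
    | add t t' ht ht' =>
      have h : (⟨0, t + t'⟩ : UGroup M) = ⟨0, t⟩ * ⟨0, t'⟩ := by ext <;> simp
      rw [h]
      exact mul_mem ht ht'
  refine eq_top_iff.2 fun x _ => ?_
  have h : x = s x.m * ⟨0, x.t⟩ := by ext <;> simp [s]
  rw [h]
  exact mul_mem (hs x.m) (hpure x.t)

lemma hom_ext_s {G : Type*} [Group G] {f g : UGroup M →* G} (h : ∀ m, f (s m) = g (s m)) :
    f = g :=
  MonoidHom.eq_of_eqOn_dense closure_range_s (by rintro _ ⟨m, rfl⟩; exact h m)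

end UGroup

lemma commSq_le_ker {M H : Type} [AddCommGroup M] [CommGroup H] (hH : ∀ h : H, h * h = 1)
    (f : UGroup M →* H) : commSq M ≤ f.ker := by
  refine Subgroup.normalClosure_le_normal ?_
  rintro x (⟨a, b, rfl⟩ | ⟨a, rfl⟩)
  · simp [mul_comm (f a), mul_assoc]
  · simp [hH]

/-- (Corollary 2.3, second part.)  The natural map
`r ∘ s : M → (UM)^{ab} ⊗ ℤ/2ℤ` is universal for quadratic maps from `M` to an
abelian group killed by `2`: for every abelian group `N` with `2N = 0` and every
quadratic map `q : M → N`, there is a unique group homomorphism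
`f : (UM)^{ab} ⊗ ℤ/2ℤ → N` with `f(r(s(m))) = q(m)` for all `m`. -/
theorem self_cup_stmt_3 (M : Type) [AddCommGroup M] (N : Type) [AddCommGroup N]
    (h2 : ∀ n : N, n + n = 0)
    (q : M → N) (hq : IsQuadraticMap q) :
    ∃! f : (UGroup M ⧸ commSq M) →* Multiplicative N,
      ∀ m : M,
        f (QuotientGroup.mk (UGroup.s m)) = Multiplicative.ofAdd (q m) := by
  have hker := commSq_le_ker (fun n : Multiplicative N => h2 n.toAdd) (UGroup.liftQuadratic hq)
  refine ⟨QuotientGroup.lift _ _ hker, fun m => by simp, fun g hg => ?_⟩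
  exact QuotientGroup.monoidHom_ext _ (UGroup.hom_ext_s fun m => by simp [hg])
end

section
/- Let M be an abelian group with 2M = 0. Then (1+m+t)² = 1 + m ⊗ m in UM for all m ∈ M and t ∈ M ⊗ M. Moreover, letting V := (UM)^{ab} ⊗ ℤ/2ℤ (the quotient of UM by the subgroup generated by all commutators and all squares), the composite M ⊗ M → UM → V (sending t to the class of 1 + t) factors through the quotient ∧²M := (M ⊗ M)/⟨m ⊗ m : m ∈ M⟩, and the resulting sequence of F₂-vector spaces 0 → ∧²M → V → M → 0, whose second map is induced by π, is exact. -/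
open scoped TensorProduct

/-- The subgroup `⟨m ⊗ m : m ∈ M⟩` of `M ⊗[ℤ] M`; the quotient by it is the
exterior square `∧²M`. -/
noncomputable def wedgeSub (M : Type) [AddCommGroup M] : AddSubgroup (TensorProduct ℤ M M) :=
  AddSubgroup.closure {x | ∃ m : M, x = m ⊗ₜ[ℤ] m}

/-! With `2M = 0`, the square of `1 + m + t` is `1 + m ⊗ m` and the commutator of `1 + m + t` and
`1 + m' + t'` is `1 + (m ⊗ m' + m' ⊗ m)`. Both lie in the subgroup of elements `1 + t` with
`t ∈ ⟨m ⊗ m⟩`, which is central and hence normal; conversely it is generated by the squares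
`(1 + m)² = 1 + m ⊗ m`. So the kernel of `UM → V` is exactly `{1 + t : t ∈ ⟨m ⊗ m⟩}`, and the
exactness of `0 → ∧²M → V → M → 0` is read off from this description. -/

theorem TensorProduct.add_self_eq_zero {M N : Type*} [AddCommGroup M] [AddCommGroup N]
    (h2 : ∀ m : M, m + m = 0) (t : M ⊗[ℤ] N) : t + t = 0 := by
  induction t using TensorProduct.induction_on with
  | zero => exact add_zero 0
  | tmul m n => rw [← TensorProduct.add_tmul, h2, TensorProduct.zero_tmul]
  | add x y hx hy => rw [add_add_add_comm, hx, hy, add_zero]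

section Wedge

variable {M : Type} [AddCommGroup M]

theorem tmul_self_mem_wedgeSub (m : M) : m ⊗ₜ[ℤ] m ∈ wedgeSub M :=
  AddSubgroup.subset_closure ⟨m, rfl⟩

theorem tmul_add_tmul_comm_mem_wedgeSub (p q : M) :
    p ⊗ₜ[ℤ] q + q ⊗ₜ[ℤ] p ∈ wedgeSub M := by
  have polarization : p ⊗ₜ[ℤ] q + q ⊗ₜ[ℤ] p
      = (p + q) ⊗ₜ[ℤ] (p + q) - p ⊗ₜ[ℤ] p - q ⊗ₜ[ℤ] q := by
    simp only [TensorProduct.add_tmul, TensorProduct.tmul_add]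
    abel
  rw [polarization]
  exact sub_mem (sub_mem (tmul_self_mem_wedgeSub _) (tmul_self_mem_wedgeSub _))
    (tmul_self_mem_wedgeSub _)

end Wedge

namespace UGroup

variable {M : Type} [AddCommGroup M]

noncomputable def proj : UGroup M →* Multiplicative M where
  toFun x := Multiplicative.ofAdd x.m
  map_one' := rfl
  map_mul' _ _ := rfl

noncomputable def ofTensor : M ⊗[ℤ] M →+ Additive (UGroup M) where
  toFun t := Additive.ofMul ⟨0, t⟩
  map_zero' := rfl
  map_add' t t' := by
    apply Additive.toMul.injective
    ext <;> simp

theorem mul_self_eq (h2 : ∀ m : M, m + m = 0) (x : UGroup M) :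
    x * x = ⟨0, x.m ⊗ₜ[ℤ] x.m⟩ := by
  ext
  · exact h2 x.m
  · rw [mul_t, add_assoc, TensorProduct.add_self_eq_zero h2, add_zero]

theorem commutator_eq (a b : UGroup M) :
    a * b * a⁻¹ * b⁻¹ = ⟨0, a.m ⊗ₜ[ℤ] b.m - b.m ⊗ₜ[ℤ] a.m⟩ := by
  ext
  · simp only [mul_m, inv_m]
    abel
  · simp only [mul_t, mul_m, inv_t, inv_m, TensorProduct.add_tmul, TensorProduct.tmul_neg,
      TensorProduct.neg_tmul]
    abel

theorem commute_of_m_eq_zero {x : UGroup M} (hx : x.m = 0) (y : UGroup M) : Commute x y := by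
  ext
  · exact add_comm _ _
  · simp only [mul_t, hx, TensorProduct.zero_tmul, TensorProduct.tmul_zero]
    abel

noncomputable def wedgeSubgroup (M : Type) [AddCommGroup M] : Subgroup (UGroup M) where
  carrier := {x | x.m = 0 ∧ x.t ∈ wedgeSub M}
  mul_mem' := by
    rintro x y ⟨hx, hxt⟩ ⟨hy, hyt⟩
    refine ⟨by simp [hx, hy], ?_⟩
    simpa [hx] using add_mem hxt hyt
  one_mem' := ⟨rfl, zero_mem _⟩
  inv_mem' := by
    rintro x ⟨hx, hxt⟩
    exact ⟨by simp [hx], by simpa [hx] using neg_mem hxt⟩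

instance (M : Type) [AddCommGroup M] : (wedgeSubgroup M).Normal where
  conj_mem n hn g := by
    rw [(commute_of_m_eq_zero hn.1 g).symm.eq, mul_inv_cancel_right]
    exact hn

theorem commSq_eq_wedgeSubgroup (h2 : ∀ m : M, m + m = 0) : commSq M = wedgeSubgroup M := by
  apply le_antisymm
  · apply Subgroup.normalClosure_le_normal
    rintro x (⟨a, b, rfl⟩ | ⟨a, rfl⟩)
    · refine ⟨by rw [commutator_eq], ?_⟩
      rw [commutator_eq, sub_eq_add_neg,
        neg_eq_of_add_eq_zero_left (TensorProduct.add_self_eq_zero h2 _)]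
      exact tmul_add_tmul_comm_mem_wedgeSub _ _
    · rw [mul_self_eq h2]
      exact ⟨rfl, tmul_self_mem_wedgeSub _⟩
  · rintro x ⟨hx, hxt⟩
    suffices wedgeSub M ≤ (commSq M).toAddSubgroup.comap ofTensor by
      have hx' : x = ⟨0, x.t⟩ := by ext <;> simp [hx]
      rw [hx']
      exact this hxt
    rw [wedgeSub, AddSubgroup.closure_le]
    rintro _ ⟨m, rfl⟩
    have hsq : Additive.toMul (ofTensor (m ⊗ₜ[ℤ] m)) = s m * s m := (mul_self_eq h2 (s m)).symm
    simp only [SetLike.mem_coe, AddSubgroup.mem_comap, Additive.mem_toAddSubgroup, hsq]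
    exact Subgroup.subset_normalClosure (Or.inr ⟨s m, rfl⟩)

theorem mem_commSq_iff (h2 : ∀ m : M, m + m = 0) (x : UGroup M) :
    x ∈ commSq M ↔ x.m = 0 ∧ x.t ∈ wedgeSub M := by
  rw [commSq_eq_wedgeSubgroup h2]
  rfl

theorem commSq_le_ker_proj (h2 : ∀ m : M, m + m = 0) : commSq M ≤ proj.ker := fun x hx =>
  congrArg Multiplicative.ofAdd ((mem_commSq_iff h2 x).1 hx).1

theorem ker_mk_comp_ofTensor (h2 : ∀ m : M, m + m = 0) :
    ((QuotientGroup.mk' (commSq M)).toAdditive.comp ofTensor).ker = wedgeSub M := by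
  ext t
  rw [AddMonoidHom.mem_ker, AddMonoidHom.comp_apply, MonoidHom.toAdditive_apply_apply,
    ofMul_eq_zero, QuotientGroup.mk'_apply, QuotientGroup.eq_one_iff, mem_commSq_iff h2]
  exact and_iff_right rfl

theorem quotient_commSq_mul_self (v : UGroup M ⧸ commSq M) : v * v = 1 :=
  QuotientGroup.induction_on v fun x =>
    (QuotientGroup.eq_one_iff _).2 (Subgroup.subset_normalClosure (Or.inr ⟨x, rfl⟩))

theorem quotient_commSq_mul_comm (v w : UGroup M ⧸ commSq M) : v * w = w * v :=
  QuotientGroup.induction_on v fun x => QuotientGroup.induction_on w fun y => by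
    rw [← QuotientGroup.mk_mul, ← QuotientGroup.mk_mul, QuotientGroup.eq]
    have hcomm : (x * y)⁻¹ * (y * x) = y⁻¹ * x⁻¹ * y⁻¹⁻¹ * x⁻¹⁻¹ := by group
    rw [hcomm]
    exact Subgroup.subset_normalClosure (Or.inl ⟨y⁻¹, x⁻¹, rfl⟩)

end UGroup

/-- (Remark 2.4(b).)  Suppose `2M = 0`.  Then `(1+m+t)² = 1 + m ⊗ m` in `UM`.
Moreover, with `V := (UM)^{ab} ⊗ ℤ/2ℤ` (the quotient of `UM` by the subgroup
generated by all commutators and all squares), the composite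
`M ⊗ M → UM → V`, `t ↦ [1 + t]`, factors through `∧²M = (M ⊗ M)/⟨m ⊗ m⟩`, and
the resulting sequence of `F₂`-vector spaces `0 → ∧²M → V → M → 0` (second map
induced by `π`) is exact. -/
theorem self_cup_stmt_5 (M : Type) [AddCommGroup M] (h2 : ∀ m : M, m + m = 0) :
    -- `(1+m+t)² = 1 + m ⊗ m`:
    (∀ x : UGroup M, x * x = ⟨0, x.m ⊗ₜ[ℤ] x.m⟩) ∧
    -- the map `V → M` induced by `π`:
    ∃ πV : (UGroup M ⧸ commSq M) →* Multiplicative M,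
      (∀ x : UGroup M, πV (QuotientGroup.mk x) = Multiplicative.ofAdd x.m) ∧
      -- exactness at `M`:
      Function.Surjective πV ∧
      -- the map `t ↦ [1 + t]` factors through `∧²M`:
      ∃ jbar : ((TensorProduct ℤ M M) ⧸ wedgeSub M) → (UGroup M ⧸ commSq M),
        (∀ t : TensorProduct ℤ M M,
          jbar (QuotientAddGroup.mk t) = QuotientGroup.mk (⟨0, t⟩ : UGroup M)) ∧
        (∀ a b, jbar (a + b) = jbar a * jbar b) ∧
        -- exactness at `∧²M`:
        Function.Injective jbar ∧
        -- exactness at `V`: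
        (∀ v : UGroup M ⧸ commSq M, πV v = 1 ↔ ∃ a, jbar a = v) ∧
        -- all the groups in the sequence are `F₂`-vector spaces:
        (∀ v : UGroup M ⧸ commSq M, v * v = 1) ∧
        (∀ v w : UGroup M ⧸ commSq M, v * w = w * v) ∧
        (∀ a : (TensorProduct ℤ M M) ⧸ wedgeSub M, a + a = 0) := by
  have hker := UGroup.ker_mk_comp_ofTensor h2
  set wedgeToV := QuotientAddGroup.lift (wedgeSub M) _ hker.ge
  refine ⟨UGroup.mul_self_eq h2, QuotientGroup.lift _ UGroup.proj (UGroup.commSq_le_ker_proj h2),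
    fun _ => rfl, fun m => ⟨QuotientGroup.mk (UGroup.s m), rfl⟩, fun a => (wedgeToV a).toMul,
    fun _ => rfl, fun a b => congrArg Additive.toMul (map_add wedgeToV a b),
    Additive.toMul.injective.comp ((QuotientAddGroup.injective_lift_iff _ _ _).2 hker.symm),
    fun v => ?_, UGroup.quotient_commSq_mul_self, UGroup.quotient_commSq_mul_comm, fun a => ?_⟩
  · induction v using QuotientGroup.induction_on with | H x => ?_
    refine ⟨fun hx => ⟨QuotientAddGroup.mk x.t, ?_⟩, ?_⟩
    · have hx : x.m = 0 := hx
      exact congrArg QuotientGroup.mk (UGroup.ext hx.symm rfl)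
    · rintro ⟨a, ha⟩
      rw [← ha]
      induction a using QuotientAddGroup.induction_on
      rfl
  · induction a using QuotientAddGroup.induction_on with | H t => ?_
    rw [← QuotientAddGroup.mk_add, TensorProduct.add_self_eq_zero h2, QuotientAddGroup.mk_zero]
end
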